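/- Let q be a positive real number, m and s positive integers with s ≤ m, and β₁, …, β_m nonzero complex numbers. Suppose v₁, …, v_s ∈ ℤ^m are linearly independent over ℚ and that for each k = 1, …, s there is an integer d_k with β₁^{v_k(1)} · β₂^{v_k(2)} ⋯ β_m^{v_k(m)} · (−q)^{d_k} = 1 (integer exponents, allowing negative powers). Then the ℚ-vector subspace of ℝ spanned by {arg(β₁), …, arg(β_m)} ∪ {π} has dimension at most m + 1 − s. -/

import Mathlib

/-!
The argument map `ℂˣ → ℝ/2πℤ` is a homomorphism and `arg (-q) = π`, so every relation
`∏ βᵢ ^ vₖᵢ * (-q) ^ dₖ = 1` becomes a `ℚ`-linear relation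
`∑ vₖᵢ arg βᵢ + (dₖ - 2nₖ) π = 0` among `arg β₁, …, arg βₘ, π`. These `s` relation vectors are
independent because their first `m` coordinates are, so by rank–nullity the span of the
`m + 1` reals has dimension at most `m + 1 - s`.
-/

open Complex Module Set Submodule

theorem Complex.arg_prod_coe_angle {ι : Type*} (s : Finset ι) {z : ι → ℂ}
    (hz : ∀ i ∈ s, z i ≠ 0) :
    (arg (∏ i ∈ s, z i) : Real.Angle) = ∑ i ∈ s, (arg (z i) : Real.Angle) := by
  classical
  induction s using Finset.induction_on with
  | empty => simp
  | insert a s ha ih =>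
    rw [Finset.forall_mem_insert] at hz
    rw [Finset.prod_insert ha, Finset.sum_insert ha,
      arg_mul_coe_angle hz.1 (Finset.prod_ne_zero_iff.mpr hz.2), ih hz.2]

theorem exists_sum_mul_arg_add_mul_pi_eq_zero {ι : Type*} [Fintype ι] {q : ℝ} (hq : 0 < q)
    {β : ι → ℂ} (hβ : ∀ i, β i ≠ 0) {u : ι → ℤ} {d : ℤ}
    (h : (∏ i, β i ^ u i) * (-(q : ℂ)) ^ d = 1) :
    ∃ n : ℤ, ∑ i, (u i : ℝ) * arg (β i) + ((d : ℝ) - 2 * n) * Real.pi = 0 := by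
  have hq' : -(q : ℂ) ≠ 0 := neg_ne_zero.mpr (ofReal_ne_zero.mpr hq.ne')
  have harg : arg (-(q : ℂ)) = Real.pi := by
    rw [← ofReal_neg]
    exact arg_ofReal_of_neg (neg_neg_of_pos hq)
  have hangle : ((∑ i, (u i : ℝ) * arg (β i) + d * Real.pi : ℝ) : Real.Angle) = 0 := by
    have := congrArg (fun z => (arg z : Real.Angle)) h
    simp only [arg_one, Real.Angle.coe_zero] at this
    rw [arg_mul_coe_angle (Finset.prod_ne_zero_iff.mpr fun i _ => zpow_ne_zero _ (hβ i))
      (zpow_ne_zero _ hq'), arg_prod_coe_angle _ fun i _ => zpow_ne_zero _ (hβ i)] at this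
    rw [← this, ← Real.Angle.coe_coeHom, map_add, map_sum]
    simp only [Real.Angle.coe_coeHom, Real.Angle.intCast_mul_eq_zsmul, arg_zpow_coe_angle, harg]
  obtain ⟨n, hn⟩ := Real.Angle.coe_eq_zero_iff.mp hangle
  refine ⟨n, ?_⟩
  rw [zsmul_eq_mul] at hn
  linarith

theorem rank_span_range_le_of_linearIndependent_relations {K V ι κ : Type*} [Field K]
    [AddCommGroup V] [Module K V] [Fintype ι] [Fintype κ] {g : ι → V} {w : κ → ι → K}
    (hw : LinearIndependent K w) (hrel : ∀ k, ∑ i, w k i • g i = 0) :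
    Module.rank K (span K (range g)) ≤ (Fintype.card ι - Fintype.card κ : ℕ) := by
  rw [← Fintype.range_linearCombination, ← finrank_eq_rank, Nat.cast_le]
  set φ := Fintype.linearCombination K g
  have hker : Fintype.card κ ≤ finrank K (LinearMap.ker φ) := by
    have hw' : LinearIndependent K fun k => (⟨w k, hrel k⟩ : LinearMap.ker φ) :=
      .of_comp (LinearMap.ker φ).subtype hw
    simpa using hw'.fintype_card_le_finrank
  have hdim : finrank K (LinearMap.range φ) + finrank K (LinearMap.ker φ) = Fintype.card ι := by
    rw [φ.finrank_range_add_finrank_ker, finrank_fintype_fun_eq_card]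
  omega

theorem angle_rank_certificate (q : ℝ) (hq : 0 < q) (m s : ℕ)
    (β : Fin m → ℂ) (hβ : ∀ i, β i ≠ 0) (v : Fin s → Fin m → ℤ)
    (hv : LinearIndependent ℚ (fun k : Fin s => fun i : Fin m => ((v k i : ℚ))))
    (hrel : ∀ k : Fin s, ∃ d : ℤ,
      (∏ i : Fin m, β i ^ (v k i)) * (-(q : ℂ)) ^ d = 1) :
    Module.rank ℚ
      (Submodule.span ℚ ((Set.range fun i : Fin m => Complex.arg (β i)) ∪ {Real.pi}))
      ≤ (m + 1 - s : ℕ) := by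
  choose d hd using hrel
  choose n hn using fun k => exists_sum_mul_arg_add_mul_pi_eq_zero hq hβ (hd k)
  let g : Option (Fin m) → ℝ := fun o => o.elim Real.pi fun i => arg (β i)
  let w : Fin s → Option (Fin m) → ℚ := fun k o => o.elim (d k - 2 * n k) fun i => v k i
  -- restricting `w k` to the coordinates `some i` gives back `v k`
  have hw : LinearIndependent ℚ w := .of_comp (LinearMap.funLeft ℚ ℚ some) hv
  have hwg : ∀ k, ∑ o, w k o • g o = 0 := by
    intro k
    simp only [Fintype.sum_option, Option.elim, w, g, Rat.smul_def]
    push_cast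
    linarith [hn k]
  rw [union_singleton, ← Option.range_elim]
  simpa using rank_span_range_le_of_linearIndependent_relations hw hwg
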